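/- For every n ≥ 3, the polynomials Z_n satisfy the third-order linear recursion Z_n = (3 − X)·Z_{n−1} + (X − 3)·Z_{n−2} + Z_{n−3} in ℤ[X]. -/
import Mathlib

open Polynomial

/-- Lucas-type polynomials: `l 0 = 2`, `l 1 = X`, `l n = X * l (n-1) - l (n-2)`. -/
noncomputable def lucPoly : ℕ → ℤ[X]
  | 0 => 2
  | 1 => X
  | (n + 2) => X * lucPoly (n + 1) - lucPoly n

/-- Herbig's variant of the spread polynomials: `Z n = 2 - lₙ(2 - X)`. -/
noncomputable def Zpoly (n : ℕ) : ℤ[X] := 2 - (lucPoly n).comp (2 - X)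

theorem Zpoly_recursion (n : ℕ) (hn : 3 ≤ n) :
    Zpoly n = (3 - X) * Zpoly (n - 1) + (X - 3) * Zpoly (n - 2) + Zpoly (n - 3) := by
  obtain ⟨m, rfl⟩ : ∃ m, n = m + 3 := ⟨n - 3, by omega⟩
  show Zpoly (m+3) = (3 - X) * Zpoly (m+2) + (X - 3) * Zpoly (m+1) + Zpoly m
  rw [Zpoly, Zpoly, Zpoly, Zpoly,
    show lucPoly (m+3) = X * lucPoly (m+2) - lucPoly (m+1) from rfl,
    show lucPoly (m+2) = X * lucPoly (m+1) - lucPoly m from rfl]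
  simp only [sub_comp, mul_comp, X_comp]
  ring
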